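/- In the single-centre setup, let y₁ be the least element of the set of solutions y ∈ (c_n − a, c_n + a), y ≠ c_n, of V(|y − c_n|) + F·y = E, and let S = {x ∈ ℝⁿ : 0 < ‖x−c‖ < a and V(‖x−c‖) + F·x_n = E}. Then the function x ↦ ‖x − c‖ attains its maximum over S exactly at the point p = (Πc, y₁): every x ∈ S satisfies ‖x − c‖ ≤ c_n − y₁, with equality if and only if x = p. -/
import Mathlib


open Filter

lemma euclid_norm_sq_eq {m : ℕ} (v : EuclideanSpace ℝ (Fin m)) :
    ‖v‖ ^ 2 = ∑ i, (v i) ^ 2 := by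
  rw [EuclideanSpace.norm_eq, Real.sq_sqrt (by positivity)]
  simp [sq_abs]

lemma euclid_coord_le {m : ℕ} (v : EuclideanSpace ℝ (Fin m)) (i : Fin m) :
    |v i| ≤ ‖v‖ := by
  have h : (v i) ^ 2 ≤ ‖v‖ ^ 2 := by
    rw [euclid_norm_sq_eq]
    exact Finset.single_le_sum (f := fun j => (v j) ^ 2)
      (fun j _ => sq_nonneg _) (Finset.mem_univ i)
  calc |v i| = Real.sqrt ((v i) ^ 2) := (Real.sqrt_sq_eq_abs _).symm
    _ ≤ Real.sqrt (‖v‖ ^ 2) := Real.sqrt_le_sqrt h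
    _ = ‖v‖ := Real.sqrt_sq (norm_nonneg v)

/-- Single-centre setup in `ℝ^{n+2}`; let `y₁` be the least solution
`y ∈ (cₙ − a, cₙ + a)`, `y ≠ cₙ`, of `V(|y − cₙ|) + F y = E`, and let
`S = {x : 0 < ‖x − c‖ < a, V(‖x−c‖) + F xₙ = E}`.  Then `x ↦ ‖x − c‖` attains its
maximum over `S` exactly at `p = (Πc, y₁)`: every `x ∈ S` satisfies
`‖x − c‖ ≤ cₙ − y₁`, with equality iff `x = p`. -/
theorem max_radius_of_inner_turning_surface
    (n : ℕ) (F E a : ℝ) (hF : 0 < F) (hE : E < 0) (ha : 0 < a)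
    (c : EuclideanSpace ℝ (Fin (n + 2)))
    (hhalf : E / F < c (Fin.last (n + 1)) - a)
    (V : ℝ → ℝ)
    (hVcont : ContinuousOn V (Set.Ioo 0 a))
    (hVmono : StrictMonoOn V (Set.Ioo 0 a))
    (hVneg : ∀ s ∈ Set.Ioo 0 a, V s < 0)
    (hVsing : Tendsto V (nhdsWithin 0 (Set.Ioi 0)) atBot)
    (hVedge : Tendsto V (nhdsWithin a (Set.Iio a)) (nhds 0))
    (y₁ : ℝ)
    (hy₁ : IsLeast {y | y ∈ Set.Ioo (c (Fin.last (n + 1)) - a) (c (Fin.last (n + 1)) + a) ∧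
      y ≠ c (Fin.last (n + 1)) ∧ V |y - c (Fin.last (n + 1))| + F * y = E} y₁)
    (S : Set (EuclideanSpace ℝ (Fin (n + 2))))
    (hS : S = {x | ‖x - c‖ ∈ Set.Ioo 0 a ∧ V ‖x - c‖ + F * x (Fin.last (n + 1)) = E}) :
    (∀ x ∈ S, ‖x - c‖ ≤ c (Fin.last (n + 1)) - y₁) ∧
    (∀ x ∈ S, ‖x - c‖ = c (Fin.last (n + 1)) - y₁ ↔
      x = Function.update c (Fin.last (n + 1)) y₁) := by
  subst hS
  set L := Fin.last (n + 1) with hL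
  set cn := c L with hcn
  set h : ℝ → ℝ := fun r => V r + F * (cn - r) with hh
  have hEF : E < F * (cn - a) := by
    rw [div_lt_iff₀ hF] at hhalf; linarith [hhalf]
  have hhcont : ContinuousOn h (Set.Ioo 0 a) :=
    hVcont.add (by fun_prop)
  -- near a, h > E
  have hnear : ∀ r₀ < a, ∃ r₁ ∈ Set.Ioo 0 a, r₀ < r₁ ∧ E < h r₁ := by
    intro r₀ hr₀
    have hlim : Tendsto h (nhdsWithin a (Set.Iio a)) (nhds (0 + F * (cn - a))) := by
      apply hVedge.add
      exact Tendsto.mono_left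
        ((continuous_const.mul (continuous_const.sub continuous_id)).tendsto a)
        nhdsWithin_le_nhds
    rw [zero_add] at hlim
    have hev : ∀ᶠ r in nhdsWithin a (Set.Iio a), E < h r :=
      hlim.eventually (eventually_gt_nhds hEF)
    have hev2 : ∀ᶠ r in nhdsWithin a (Set.Iio a), r ∈ Set.Ioo (max r₀ 0) a := by
      apply Ioo_mem_nhdsLT_of_mem
      constructor
      · simp [hr₀, ha]
      · exact le_refl a
    obtain ⟨r₁, h1, h2⟩ := (hev.and hev2).exists
    exact ⟨r₁, ⟨lt_of_le_of_lt (le_max_right r₀ 0) h2.1, h2.2⟩,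
      lt_of_le_of_lt (le_max_left r₀ 0) h2.1, h1⟩
  -- key lemma: if h r ≤ E for r ∈ Ioo 0 a then r ≤ cn - y₁
  have hkey : ∀ r ∈ Set.Ioo 0 a, h r ≤ E → r ≤ cn - y₁ := by
    intro r hr hre
    by_contra hcon
    push_neg at hcon
    obtain ⟨r₁, hr₁, hrr₁, hEr₁⟩ := hnear r hr.2
    have hsub : Set.Icc r r₁ ⊆ Set.Ioo 0 a := fun s hs =>
      ⟨lt_of_lt_of_le hr.1 hs.1, lt_of_le_of_lt hs.2 hr₁.2⟩
    have hIVT := intermediate_value_Icc (le_of_lt hrr₁) (hhcont.mono hsub)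
    obtain ⟨r', hr', hhr'⟩ := hIVT ⟨hre, le_of_lt hEr₁⟩
    have hr'mem := hsub hr'
    -- y' = cn - r' is a solution less than y₁
    have hy' : (cn - r') ∈ {y | y ∈ Set.Ioo (cn - a) (cn + a) ∧
        y ≠ cn ∧ V |y - cn| + F * y = E} := by
      refine ⟨⟨by linarith [hr'mem.2], by linarith [hr'mem.1]⟩,
        by intro hc; have := sub_eq_self.mp hc; linarith [hr'mem.1], ?_⟩
      have : |cn - r' - cn| = r' := by
        rw [show cn - r' - cn = -r' by ring, abs_neg, abs_of_pos hr'mem.1]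
      rw [this]
      exact hhr'
    have := hy₁.2 hy'
    linarith [hr'.1]
  -- y₁ < cn : there exists a solution below cn
  have hy₁lt : y₁ < cn := by
    -- find r₀ small with h r₀ < E
    have hlim0 : Tendsto h (nhdsWithin 0 (Set.Ioi 0)) atBot := by
      apply Filter.Tendsto.atBot_add hVsing (C := F * (cn - 0))
      exact Tendsto.mono_left
        ((continuous_const.mul (continuous_const.sub continuous_id)).tendsto 0)
        nhdsWithin_le_nhds
    have hev : ∀ᶠ r in nhdsWithin 0 (Set.Ioi 0), h r < E := hlim0.eventually_lt_atBot E
    have hev2 : ∀ᶠ r in nhdsWithin 0 (Set.Ioi 0), r ∈ Set.Ioo 0 a := by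
      apply Ioo_mem_nhdsGT_of_mem
      exact ⟨le_refl 0, ha⟩
    obtain ⟨r₀, h1, h2⟩ := (hev.and hev2).exists
    obtain ⟨r₁, hr₁, hrr₁, hEr₁⟩ := hnear r₀ h2.2
    have hsub : Set.Icc r₀ r₁ ⊆ Set.Ioo 0 a := fun s hs =>
      ⟨lt_of_lt_of_le h2.1 hs.1, lt_of_le_of_lt hs.2 hr₁.2⟩
    obtain ⟨r', hr', hhr'⟩ := intermediate_value_Icc (le_of_lt hrr₁) (hhcont.mono hsub)
      ⟨le_of_lt h1, le_of_lt hEr₁⟩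
    have hr'mem := hsub hr'
    have hy' : (cn - r') ∈ {y | y ∈ Set.Ioo (cn - a) (cn + a) ∧
        y ≠ cn ∧ V |y - cn| + F * y = E} := by
      refine ⟨⟨by linarith [hr'mem.2], by linarith [hr'mem.1]⟩,
        by intro hc; have := sub_eq_self.mp hc; linarith [hr'mem.1], ?_⟩
      have : |cn - r' - cn| = r' := by
        rw [show cn - r' - cn = -r' by ring, abs_neg, abs_of_pos hr'mem.1]
      rw [this]
      exact hhr'
    have := hy₁.2 hy'
    linarith [hr'mem.1]
  -- part 1
  have part1 : ∀ x ∈ {x : EuclideanSpace ℝ (Fin (n + 2)) |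
      ‖x - c‖ ∈ Set.Ioo 0 a ∧ V ‖x - c‖ + F * x L = E},
      ‖x - c‖ ≤ cn - y₁ := by
    intro x ⟨hx1, hx2⟩
    have hcoord : |(x - c) L| ≤ ‖x - c‖ := euclid_coord_le _ L
    have hxc : (x - c) L = x L - cn := rfl
    rw [hxc] at hcoord
    have hxL : cn - ‖x - c‖ ≤ x L := by
      have := (abs_le.mp hcoord).1; linarith
    apply hkey _ hx1
    have : F * (cn - ‖x - c‖) ≤ F * x L := by
      apply mul_le_mul_of_nonneg_left hxL (le_of_lt hF)
    simp only [hh]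
    linarith [hx2]
  refine ⟨part1, ?_⟩
  intro x hx
  obtain ⟨hx1, hx2⟩ := hx
  constructor
  · intro hr
    -- equality case
    have hry : |y₁ - cn| = cn - y₁ := by
      rw [abs_of_neg (by linarith)]; ring
    have hy₁eq : V (cn - y₁) + F * y₁ = E := by
      have := hy₁.1.2.2
      rwa [hry] at this
    have hxL : x L = y₁ := by
      rw [hr] at hx2
      have : F * x L = F * y₁ := by linarith
      exact mul_left_cancel₀ (ne_of_gt hF) this
    -- now all other coordinates equal
    have hnorm : ‖x - c‖ ^ 2 = ∑ i, ((x - c) i) ^ 2 := euclid_norm_sq_eq _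
    have hterm : ((x - c) L) ^ 2 = ‖x - c‖ ^ 2 := by
      have : (x - c) L = x L - cn := rfl
      rw [this, hxL, hr]; ring
    have hrest : ∑ i ∈ Finset.univ.erase L, ((x - c) i) ^ 2 = 0 := by
      have hkey2 : ((x - c) L) ^ 2 + ∑ i ∈ Finset.univ.erase L, ((x - c) i) ^ 2
          = ‖x - c‖ ^ 2 := by
        rw [hnorm]
        exact Finset.add_sum_erase Finset.univ (fun i => ((x - c) i) ^ 2)
          (Finset.mem_univ L)
      linarith [hterm, hkey2]
    have hzero : ∀ i ∈ Finset.univ.erase L, ((x - c) i) ^ 2 = 0 :=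
      (Finset.sum_eq_zero_iff_of_nonneg (fun i _ => sq_nonneg _)).mp hrest
    funext i
    by_cases hi : i = L
    · subst hi; rw [hxL]; simp [Function.update]
    · have := hzero i (Finset.mem_erase.mpr ⟨hi, Finset.mem_univ i⟩)
      have hxi : (x - c) i = 0 := by
        exact pow_eq_zero_iff (n := 2) (by norm_num) |>.mp this
      have : x i - c i = 0 := hxi
      simp [Function.update, hi]
      linarith
  · intro hxeq
    have hptw : ∀ i, x i = Function.update c L y₁ i := fun i => by rw [hxeq]
    have hxL : x L = y₁ := by rw [hptw L]; simp [Function.update]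
    have hxi : ∀ i, i ≠ L → x i = c i := by
      intro i hi; rw [hptw i]; simp [Function.update, hi]
    have hco : ∀ i, (x - c) i = x i - c i := fun i => rfl
    have h2 : ‖x - c‖ ^ 2 = (cn - y₁) ^ 2 := by
      rw [euclid_norm_sq_eq]
      rw [Finset.sum_eq_single L]
      · rw [hco, hxL]; ring
      · intro j _ hj; rw [hco, hxi j hj]; ring
      · intro h; exact absurd (Finset.mem_univ L) h
    calc ‖x - c‖
        = Real.sqrt (‖x - c‖ ^ 2) := (Real.sqrt_sq (norm_nonneg _)).symm
      _ = Real.sqrt ((cn - y₁) ^ 2) := by rw [h2]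
      _ = cn - y₁ := Real.sqrt_sq (by linarith)
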